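/- Let m ≥ 1 and let σ be a non-crossing pair partition of [2m] (every block has size exactly 2) with blocks of even cardinality, and let π be any non-crossing partition of [2m] with all blocks of even cardinality such that Φ(π) = Φ(σ), where Φ is the quotient map identifying 2k−1 and 2k. Then σ is finer than π: every block of σ is contained in a block of π. -/

import Mathlib

/-
Call `2k` and `2k + 1` (0-indexed) twins. Because `Φ(π) = Φ(σ)`, a set closed under twins is a
union of `π`-blocks iff it is a union of `σ`-blocks. In a non-crossing partition the gaps of a block
are unions of blocks, so when all blocks are even, consecutive points of a block are at odd distance
and a gap starting right after an odd point is closed under twins. For a pair `{x, y}` of `σ` let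
`p` be its odd point and `q` the other one: the cyclic interval from `p` to `q` is such a gap of
`σ`, hence a union of `π`-blocks. So if `q` were not in the `π`-block of `p`, it would lie in the
gap of that block following `p`, a union of `σ`-blocks containing `q` but not `p`.
-/

open Classical

/-- `i` and `j` lie in the same block of the partition `P`. -/
def SameBlock {N : ℕ} (P : Finpartition (Finset.univ : Finset (Fin N))) (i j : Fin N) : Prop :=
  ∃ b ∈ P.parts, i ∈ b ∧ j ∈ b

/-- A partition of `[N]` is non-crossing if for `i < j < k < l`, `i ∼ k` and `j ∼ l`
imply `i ∼ j` (equivalent for the linear and the cyclic order). -/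
def IsNonCrossing {N : ℕ} (P : Finpartition (Finset.univ : Finset (Fin N))) : Prop :=
  ∀ i j k l : Fin N, i < j → j < k → k < l →
    SameBlock P i k → SameBlock P j l → SameBlock P i j

/-- The element of `[2m]` (0-indexed) corresponding to the 1-based element `2k−1`,
where `k ∈ [m]` is represented 0-indexed. -/
def dbl {m : ℕ} (k : Fin m) : Fin (2 * m) := ⟨2 * k.val, by have := k.isLt; omega⟩

/-- The element of `[2m]` (0-indexed) corresponding to the 1-based element `2k`. -/
def dbl' {m : ℕ} (k : Fin m) : Fin (2 * m) := ⟨2 * k.val + 1, by have := k.isLt; omega⟩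

/-- The relation on `[m]` defining `Φ(π)`: the transitive (and reflexive-symmetric)
closure of the relation relating `k` and `l` whenever some element of `{2k−1, 2k}` is
`π`-equivalent to some element of `{2l−1, 2l}`. -/
def PhiRel {m : ℕ} (π : Finpartition (Finset.univ : Finset (Fin (2 * m)))) :
    Fin m → Fin m → Prop :=
  Relation.EqvGen (fun k l =>
    SameBlock π (dbl k) (dbl l) ∨ SameBlock π (dbl k) (dbl' l) ∨
    SameBlock π (dbl' k) (dbl l) ∨ SameBlock π (dbl' k) (dbl' l))

section NonCrossing

variable {N : ℕ}

theorem SameBlock.symm {P : Finpartition (Finset.univ : Finset (Fin N))} {i j : Fin N}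
    (h : SameBlock P i j) : SameBlock P j i := by
  obtain ⟨b, hb, hi, hj⟩ := h
  exact ⟨b, hb, hj, hi⟩

theorem SameBlock.trans {P : Finpartition (Finset.univ : Finset (Fin N))} {i j k : Fin N}
    (hij : SameBlock P i j) (hjk : SameBlock P j k) : SameBlock P i k := by
  obtain ⟨b, hb, hi, hj⟩ := hij
  obtain ⟨c, hc, hj', hk⟩ := hjk
  exact ⟨b, hb, hi, P.eq_of_mem_parts hc hb hj' hj ▸ hk⟩

theorem sameBlock_refl (P : Finpartition (Finset.univ : Finset (Fin N))) (i : Fin N) :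
    SameBlock P i i := by
  obtain ⟨b, hb, hi⟩ := P.exists_mem (Finset.mem_univ i)
  exact ⟨b, hb, hi, hi⟩

theorem sameBlock_eq_or_eq_of_card_two {P : Finpartition (Finset.univ : Finset (Fin N))}
    (hP : ∀ b ∈ P.parts, b.card = 2) {x y z : Fin N} (hxy : SameBlock P x y) (hne : x ≠ y)
    (hxz : SameBlock P x z) : z = x ∨ z = y := by
  obtain ⟨b, hb, hx, hy⟩ := hxy
  obtain ⟨c, hc, hx', hz⟩ := hxz
  have hpair : b = {x, y} := (Finset.eq_of_subset_of_card_le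
    (Finset.insert_subset hx (Finset.singleton_subset_iff.mpr hy))
    (by rw [hP b hb, Finset.card_pair hne])).symm
  rw [P.eq_of_mem_parts hc hb hx' hx, hpair] at hz
  simpa using hz

def IsSaturated {α : Type*} (r : α → α → Prop) (S : Finset α) : Prop :=
  ∀ ⦃i j⦄, r i j → i ∈ S → j ∈ S

theorem even_card_of_isSaturated {P : Finpartition (Finset.univ : Finset (Fin N))}
    (hP : ∀ b ∈ P.parts, Even b.card) {S : Finset (Fin N)} (hS : IsSaturated (SameBlock P) S) :
    Even S.card := by
  have hsum : ∑ b ∈ P.parts, (b ∩ S).card = S.card := by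
    rw [← (P.restrict (Finset.subset_univ S)).sum_card_parts]
    exact (P.sum_restrict _ Finset.card rfl).symm
  rw [← hsum]
  refine Finset.even_sum _ fun b hb => ?_
  by_cases hbS : ∃ i ∈ b, i ∈ S
  · obtain ⟨i, hib, hiS⟩ := hbS
    rw [Finset.inter_eq_left.mpr fun j hj => hS ⟨b, hb, hib, hj⟩ hiS]
    exact hP b hb
  · push Not at hbS
    rw [Finset.disjoint_iff_inter_eq_empty.mp (Finset.disjoint_left.mpr hbS)]
    exact Even.zero

/-- Points are 0-indexed: the twins `2k, 2k + 1` are the points `2k + 1, 2k + 2` of `[2m]` that `Φ`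
identifies, and parities below are those of the 0-indexed values. -/
def Twin (i j : Fin N) : Prop := i.val / 2 = j.val / 2

theorem IsNonCrossing.isSaturated_Ioo {P : Finpartition (Finset.univ : Finset (Fin N))}
    (hP : IsNonCrossing P) {a b : Fin N} (hab : SameBlock P a b)
    (hgap : ∀ z, a < z → z < b → ¬ SameBlock P a z) :
    IsSaturated (SameBlock P) (Finset.Ioo a b) := by
  intro z w hzw hz
  rw [Finset.mem_Ioo] at hz ⊢
  by_contra hw
  rcases lt_trichotomy w a with hwa | rfl | haw
  · exact hgap z hz.1 hz.2 ((hP w a z b hwa hz.1 hz.2 hzw.symm hab).symm.trans hzw.symm)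
  · exact hgap z hz.1 hz.2 hzw.symm
  rcases lt_trichotomy w b with hwb | rfl | hbw
  · exact hw ⟨haw, hwb⟩
  · exact hgap z hz.1 hz.2 (hab.trans hzw.symm)
  · exact hgap z hz.1 hz.2 (hP a z b w hz.1 hz.2 hbw hab hzw)

theorem IsNonCrossing.isSaturated_Icc {P : Finpartition (Finset.univ : Finset (Fin N))}
    (hP : IsNonCrossing P) {a b : Fin N} (hab : SameBlock P a b)
    (hbound : ∀ z, SameBlock P a z → a ≤ z ∧ z ≤ b) :
    IsSaturated (SameBlock P) (Finset.Icc a b) := by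
  intro z w hzw hz
  rw [Finset.mem_Icc] at hz ⊢
  by_cases haz : SameBlock P a z
  · exact hbound w (haz.trans hzw)
  have haz' : a < z := lt_of_le_of_ne hz.1 (by rintro rfl; exact haz (sameBlock_refl P a))
  have hzb : z < b := lt_of_le_of_ne hz.2 (by rintro rfl; exact haz hab)
  by_contra hw
  rcases lt_or_ge w a with hwa | haw
  · exact haz ((hP w a z b hwa haz' hzb hzw.symm hab).symm.trans hzw.symm)
  · exact haz (hP a z b w haz' hzb (lt_of_not_ge fun hwb => hw ⟨haw, hwb⟩) hab hzw)

theorem isSaturated_twin_Icc {a b : Fin N} (ha : Even a.val) (hb : Odd b.val) :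
    IsSaturated Twin (Finset.Icc a b) := by
  intro i j hij hi
  rw [Finset.mem_Icc] at hi ⊢
  rw [Nat.even_iff] at ha
  rw [Nat.odd_iff] at hb
  unfold Twin at hij
  omega

theorem isSaturated_twin_Ioo {a b : Fin N} (ha : Odd a.val) (hb : Even b.val) :
    IsSaturated Twin (Finset.Ioo a b) := by
  intro i j hij hi
  rw [Finset.mem_Ioo] at hi ⊢
  rw [Nat.odd_iff] at ha
  rw [Nat.even_iff] at hb
  unfold Twin at hij
  omega

section Phi

variable {m : ℕ}

def half (i : Fin (2 * m)) : Fin m := ⟨i.val / 2, by omega⟩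

theorem eq_dbl_half_or_eq_dbl'_half (i : Fin (2 * m)) : i = dbl (half i) ∨ i = dbl' (half i) := by
  simp only [Fin.ext_iff, dbl, dbl', half]
  omega

theorem twin_dbl_half (i : Fin (2 * m)) : Twin i (dbl (half i)) := by
  simp only [Twin, dbl, half]
  omega

@[simp] theorem half_dbl (k : Fin m) : half (dbl k) = k := by
  ext; simp only [half, dbl]; omega

@[simp] theorem half_dbl' (k : Fin m) : half (dbl' k) = k := by
  ext; simp only [half, dbl']; omega

theorem isSaturated_sameBlock_iff_phiRel (P : Finpartition (Finset.univ : Finset (Fin (2 * m))))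
    {S : Finset (Fin (2 * m))} (hS : IsSaturated Twin S) :
    IsSaturated (SameBlock P) S ↔ ∀ k l, PhiRel P k l → (dbl k ∈ S ↔ dbl l ∈ S) := by
  have hmem : ∀ i, i ∈ S ↔ dbl (half i) ∈ S := fun i =>
    ⟨fun hi => hS (twin_dbl_half i) hi, fun hi => hS (twin_dbl_half i).symm hi⟩
  constructor
  · intro hP k l hkl
    have hblock : ∀ u v, SameBlock P u v → (dbl (half u) ∈ S ↔ dbl (half v) ∈ S) :=
      fun u v huv => by rw [← hmem, ← hmem]; exact ⟨fun hu => hP huv hu, fun hv => hP huv.symm hv⟩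
    induction hkl with
    | rel k l h => rcases h with h | h | h | h <;> simpa using hblock _ _ h
    | refl => rfl
    | symm _ _ _ ih => exact ih.symm
    | trans _ _ _ _ _ ih₁ ih₂ => exact ih₁.trans ih₂
  · intro hPhi i j hij hi
    rw [hmem] at hi ⊢
    refine (hPhi _ _ (.rel _ _ ?_)).mp hi
    rcases eq_dbl_half_or_eq_dbl'_half i with hi' | hi' <;>
      rcases eq_dbl_half_or_eq_dbl'_half j with hj' | hj' <;> rw [hi', hj'] at hij <;> simp [hij]

theorem isSaturated_sameBlock_iff_of_phiRel_iff
    {σ π : Finpartition (Finset.univ : Finset (Fin (2 * m)))}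
    (hPhi : ∀ k l : Fin m, PhiRel π k l ↔ PhiRel σ k l) {S : Finset (Fin (2 * m))}
    (hS : IsSaturated Twin S) : IsSaturated (SameBlock π) S ↔ IsSaturated (SameBlock σ) S := by
  simp only [isSaturated_sameBlock_iff_phiRel _ hS, hPhi]

end Phi

section PairingFiner

variable {m : ℕ} {σ π : Finpartition (Finset.univ : Finset (Fin (2 * m)))} {x y : Fin (2 * m)}

theorem isSaturated_Ioo_of_pair (hσnc : IsNonCrossing σ) (hσpair : ∀ b ∈ σ.parts, b.card = 2)
    (hxy : SameBlock σ x y) (hlt : x < y) : IsSaturated (SameBlock σ) (Finset.Ioo x y) :=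
  hσnc.isSaturated_Ioo hxy fun z hxz hzy hz => by
    rcases sameBlock_eq_or_eq_of_card_two hσpair hxy hlt.ne hz with rfl | rfl
    exacts [lt_irrefl z hxz, lt_irrefl z hzy]

theorem isSaturated_Icc_of_pair (hσnc : IsNonCrossing σ) (hσpair : ∀ b ∈ σ.parts, b.card = 2)
    (hxy : SameBlock σ x y) (hlt : x < y) : IsSaturated (SameBlock σ) (Finset.Icc x y) :=
  hσnc.isSaturated_Icc hxy fun z hz => by
    rcases sameBlock_eq_or_eq_of_card_two hσpair hxy hlt.ne hz with rfl | rfl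
    exacts [⟨le_rfl, hlt.le⟩, ⟨hlt.le, le_rfl⟩]

theorem odd_add_of_pair (hσnc : IsNonCrossing σ) (hσpair : ∀ b ∈ σ.parts, b.card = 2)
    (hxy : SameBlock σ x y) (hlt : x < y) : Odd (x.val + y.val) := by
  have hcard := even_card_of_isSaturated (fun b hb => by rw [hσpair b hb]; exact even_two)
    (isSaturated_Ioo_of_pair hσnc hσpair hxy hlt)
  rw [Fin.card_Ioo, Nat.even_iff] at hcard
  rw [Nat.odd_iff]
  omega

/-- `[a, p]` is a union of `π`-blocks, hence of even size; so `a` is even and `[a, p]` is closed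
under twins. -/
theorem exists_sameBlock_and_mem_Icc_of_odd_max (hπnc : IsNonCrossing π)
    (hπeven : ∀ b ∈ π.parts, Even b.card)
    (hsat : ∀ S, IsSaturated Twin S → (IsSaturated (SameBlock π) S ↔ IsSaturated (SameBlock σ) S))
    {p : Fin (2 * m)} (hp : Odd p.val) (hmax : ∀ z, SameBlock π p z → z ≤ p) :
    ∃ a, SameBlock π p a ∧ ∀ q, SameBlock σ p q → a ≤ q ∧ q ≤ p := by
  set B := Finset.univ.filter (SameBlock π p)
  have hB : B.Nonempty := ⟨p, by simp [B, sameBlock_refl]⟩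
  have hpa : SameBlock π p (B.min' hB) := by simpa [B] using B.min'_mem hB
  have hIcc : IsSaturated (SameBlock π) (Finset.Icc (B.min' hB) p) :=
    hπnc.isSaturated_Icc hpa.symm fun z hz =>
      ⟨B.min'_le z (by simpa [B] using hpa.trans hz), hmax z (hpa.trans hz)⟩
  have ha : Even (B.min' hB).val := by
    have hcard := even_card_of_isSaturated hπeven hIcc
    have hap : B.min' hB ≤ p := hmax _ hpa
    rw [Fin.card_Icc, Nat.even_iff] at hcard
    rw [Nat.odd_iff] at hp
    rw [Nat.even_iff]
    omega
  refine ⟨B.min' hB, hpa, fun q hq => Finset.mem_Icc.mp ?_⟩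
  exact (hsat _ (isSaturated_twin_Icc ha hp)).mp hIcc hq (Finset.mem_Icc.mpr ⟨hmax _ hpa, le_rfl⟩)

theorem sameBlock_of_pair_of_odd (hσnc : IsNonCrossing σ) (hσpair : ∀ b ∈ σ.parts, b.card = 2)
    (hπnc : IsNonCrossing π) (hπeven : ∀ b ∈ π.parts, Even b.card)
    (hsat : ∀ S, IsSaturated Twin S → (IsSaturated (SameBlock π) S ↔ IsSaturated (SameBlock σ) S))
    (hxy : SameBlock σ x y) (hlt : x < y) (hx : Odd x.val) (hy : Even y.val) :
    SameBlock π x y := by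
  by_contra hnot
  have hI : IsSaturated (SameBlock π) (Finset.Ioo x y) :=
    (hsat _ (isSaturated_twin_Ioo hx hy)).mpr (isSaturated_Ioo_of_pair hσnc hσpair hxy hlt)
  by_cases hup : ∃ b, SameBlock π x b ∧ x < b
  · -- the next point `b` of the `π`-block of `x` lies beyond `y`, and `(x, b)` separates `y` from `x`
    set B := Finset.univ.filter (fun z => SameBlock π x z ∧ x < z)
    have hB : B.Nonempty := by
      obtain ⟨b, hb⟩ := hup
      exact ⟨b, by simpa [B] using hb⟩
    obtain ⟨hxb, hxltb⟩ : SameBlock π x (B.min' hB) ∧ x < B.min' hB := by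
      simpa [B] using B.min'_mem hB
    have hyb : y < B.min' hB := by
      refine lt_of_le_of_ne (not_lt.mp fun hby => ?_) (fun hyb => hnot (hyb ▸ hxb))
      exact lt_irrefl x (Finset.mem_Ioo.mp (hI hxb.symm (Finset.mem_Ioo.mpr ⟨hxltb, hby⟩))).1
    have hgap : IsSaturated (SameBlock π) (Finset.Ioo x (B.min' hB)) :=
      hπnc.isSaturated_Ioo hxb fun z hxz hzb hz =>
        not_le.mpr hzb (B.min'_le z (by simp [B, hz, hxz]))
    have hb : Even (B.min' hB).val := by
      have hcard := even_card_of_isSaturated hπeven hgap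
      rw [Fin.card_Ioo, Nat.even_iff] at hcard
      rw [Nat.odd_iff] at hx
      rw [Nat.even_iff]
      omega
    have hyx := (hsat _ (isSaturated_twin_Ioo hx hb)).mp hgap hxy.symm
      (Finset.mem_Ioo.mpr ⟨hlt, hyb⟩)
    exact lt_irrefl x (Finset.mem_Ioo.mp hyx).1
  · push Not at hup
    obtain ⟨a, -, ha⟩ := exists_sameBlock_and_mem_Icc_of_odd_max hπnc hπeven hsat hx hup
    exact not_le.mpr hlt (ha y hxy).2

theorem sameBlock_of_pair_of_even (hσnc : IsNonCrossing σ) (hσpair : ∀ b ∈ σ.parts, b.card = 2)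
    (hπnc : IsNonCrossing π) (hπeven : ∀ b ∈ π.parts, Even b.card)
    (hsat : ∀ S, IsSaturated Twin S → (IsSaturated (SameBlock π) S ↔ IsSaturated (SameBlock σ) S))
    (hxy : SameBlock σ x y) (hlt : x < y) (hx : Even x.val) (hy : Odd y.val) :
    SameBlock π x y := by
  by_contra hnot
  have hJ : IsSaturated (SameBlock π) (Finset.Icc x y) :=
    (hsat _ (isSaturated_twin_Icc hx hy)).mpr (isSaturated_Icc_of_pair hσnc hσpair hxy hlt)
  have hblock : ∀ z, SameBlock π y z → x < z ∧ z ≤ y := fun z hz => by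
    obtain ⟨hxz, hzy⟩ := Finset.mem_Icc.mp (hJ hz (Finset.mem_Icc.mpr ⟨hlt.le, le_rfl⟩))
    exact ⟨lt_of_le_of_ne hxz (by rintro rfl; exact hnot hz.symm), hzy⟩
  obtain ⟨a, hya, ha⟩ := exists_sameBlock_and_mem_Icc_of_odd_max hπnc hπeven hsat hy
    fun z hz => (hblock z hz).2
  exact not_le.mpr (hblock a hya).1 (ha x hxy.symm).1

theorem sameBlock_of_pair_of_lt (hσnc : IsNonCrossing σ) (hσpair : ∀ b ∈ σ.parts, b.card = 2)
    (hπnc : IsNonCrossing π) (hπeven : ∀ b ∈ π.parts, Even b.card)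
    (hsat : ∀ S, IsSaturated Twin S → (IsSaturated (SameBlock π) S ↔ IsSaturated (SameBlock σ) S))
    (hxy : SameBlock σ x y) (hlt : x < y) : SameBlock π x y := by
  have hwidth := Nat.odd_add.mp (odd_add_of_pair hσnc hσpair hxy hlt)
  rcases Nat.even_or_odd x.val with hx | hx
  · exact sameBlock_of_pair_of_even hσnc hσpair hπnc hπeven hsat hxy hlt hx
      (Nat.not_even_iff_odd.mp (mt hwidth.mpr (Nat.not_odd_iff_even.mpr hx)))
  · exact sameBlock_of_pair_of_odd hσnc hσpair hπnc hπeven hsat hxy hlt hx (hwidth.mp hx)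

end PairingFiner

theorem pairing_finer_of_Phi_eq_general (m : ℕ)
    (σ π : Finpartition (Finset.univ : Finset (Fin (2 * m))))
    (hσnc : IsNonCrossing σ) (hσpair : ∀ b ∈ σ.parts, b.card = 2)
    (hπnc : IsNonCrossing π) (hπeven : ∀ b ∈ π.parts, Even b.card)
    (hPhi : ∀ k l : Fin m, PhiRel π k l ↔ PhiRel σ k l) :
    ∀ i j : Fin (2 * m), SameBlock σ i j → SameBlock π i j := by
  have hsat S (hS : IsSaturated Twin S) := isSaturated_sameBlock_iff_of_phiRel_iff hPhi hS
  intro i j hij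
  rcases lt_trichotomy i j with hlt | rfl | hgt
  · exact sameBlock_of_pair_of_lt hσnc hσpair hπnc hπeven hsat hij hlt
  · exact sameBlock_refl π i
  · exact (sameBlock_of_pair_of_lt hσnc hσpair hπnc hπeven hsat hij.symm hgt).symm

/-- Let `σ` be a non-crossing pair partition of `[2m]` (all blocks of size 2) and `π`
a non-crossing partition of `[2m]` with all blocks of even cardinality, such that
`Φ(π) = Φ(σ)` (the quotient partitions identifying `2k−1` with `2k` coincide).  Then
`σ` is finer than `π`: any two `σ`-equivalent elements are `π`-equivalent. -/
theorem pairing_finer_of_Phi_eq (m : ℕ) (hm : 0 < m)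
    (σ π : Finpartition (Finset.univ : Finset (Fin (2 * m))))
    (hσnc : IsNonCrossing σ) (hσpair : ∀ b ∈ σ.parts, b.card = 2)
    (hπnc : IsNonCrossing π) (hπeven : ∀ b ∈ π.parts, Even b.card)
    (hPhi : ∀ k l : Fin m, PhiRel π k l ↔ PhiRel σ k l) :
    ∀ i j : Fin (2 * m), SameBlock σ i j → SameBlock π i j :=
  pairing_finer_of_Phi_eq_general m σ π hσnc hσpair hπnc hπeven hPhi
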